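/- Let n ∈ ℕ, t ≥ 1, and let H = ((x^1,s^1),…,(x^t,s^t)) be a feasible guessing history with candidate sets V_1,…,V_n, and let s* = max{s^1,…,s^t}. If s* < n, then the number of secret pairs (z,π) ∈ {0,1}^n × S_n consistent with H equals 2^{n−s*−1} · ∏_{i=1}^{n} ( |V_i| − |{ j < i : V_j ⊆ V_i }| ). -/
import Mathlib

open Finset

/-! ### Auxiliary boolean lemmas -/

private lemma bool_eq_of_ne_ne : ∀ {a b c : Bool}, a ≠ c → b ≠ c → a = b := by decide

private lemma bool_eq_of_ne_ne' : ∀ {a b c : Bool}, c ≠ a → c ≠ b → a = b := by decide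

private lemma bool_ne_not : ∀ {a b : Bool}, a = b → a ≠ !b := by decide

/-! ### Counting systems of distinct representatives of an ordered laminar family -/

private lemma snoc_inj {α : Type*} {m : ℕ} {g : Fin m → α} {a : α}
    (hg : Function.Injective g) (ha : ∀ k, g k ≠ a) :
    Function.Injective (Fin.snoc g a : Fin (m + 1) → α) := by
  intro p q h
  induction p using Fin.lastCases with
  | last =>
    induction q using Fin.lastCases with
    | last => rfl
    | cast q =>
      rw [Fin.snoc_last, Fin.snoc_castSucc] at h
      exact absurd h.symm (ha q)
  | cast p =>
    induction q using Fin.lastCases with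
    | last =>
      rw [Fin.snoc_last, Fin.snoc_castSucc] at h
      exact absurd h (ha p)
    | cast q =>
      rw [Fin.snoc_castSucc, Fin.snoc_castSucc] at h
      rw [hg h]

private lemma card_filter_lt_and {m : ℕ} (i : Fin (m + 1)) (p : Fin (m + 1) → Prop)
    [DecidablePred p] :
    (univ.filter fun j : Fin (m + 1) => j < i ∧ p j).card
      = (univ.filter fun k : Fin m => k.castSucc < i ∧ p k.castSucc).card := by
  refine Finset.card_bij' (fun j hj => j.castPred ?_) (fun k _ => k.castSucc) ?_ ?_ ?_ ?_
  · simp only [mem_filter, mem_univ, true_and] at hj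
    have : j < Fin.last m := lt_of_lt_of_le hj.1 (Fin.le_last i)
    exact Fin.ne_last_of_lt this
  · intro j hj
    simp only [mem_filter, mem_univ, true_and] at hj ⊢
    rw [Fin.castSucc_castPred]
    exact hj
  · intro k hk
    simp only [mem_filter, mem_univ, true_and] at hk ⊢
    exact hk
  · intro j hj
    exact Fin.castSucc_castPred _ _
  · intro k hk
    exact Fin.castPred_castSucc _

/-- Counting injective choice functions for an ordered laminar family of finite sets:
the number of injective `f` with `f j ∈ W j` for all `j` equals
`∏ i (|W i| - #{j < i : W j ⊆ W i})`. -/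
private lemma sdr_count {α : Type*} [Fintype α] [DecidableEq α] :
    ∀ (m : ℕ) (W : Fin m → Finset α),
      (∀ j i : Fin m, j < i → W j ⊆ W i ∨ Disjoint (W j) (W i)) →
      (univ.filter fun f : Fin m → α => Function.Injective f ∧ ∀ j, f j ∈ W j).card
        = ∏ i, ((W i).card - (univ.filter fun j => j < i ∧ W j ⊆ W i).card) := by
  intro m
  induction m with
  | zero =>
    intro W _
    rw [Finset.filter_true_of_mem, Finset.card_univ]
    · simp
    · intro f _
      exact ⟨fun a => absurd a.2 (Nat.not_lt_zero _), fun j => absurd j.2 (Nat.not_lt_zero _)⟩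
  | succ m ih =>
    intro W hlam
    set W' : Fin m → Finset α := fun j => W j.castSucc with hW'
    have hlam' : ∀ j i : Fin m, j < i → W' j ⊆ W' i ∨ Disjoint (W' j) (W' i) := by
      intro j i hji
      exact hlam j.castSucc i.castSucc (by simpa using hji)
    obtain ⟨c, hc⟩ : ∃ c : ℕ, c = (univ.filter fun j : Fin m => W' j ⊆ W (Fin.last m)).card :=
      ⟨_, rfl⟩
    -- fiberwise count over the restriction to the first m coordinates
    have hmap : ∀ f ∈ (univ.filter fun f : Fin (m+1) → α =>
        Function.Injective f ∧ ∀ j, f j ∈ W j), (fun k : Fin m => f k.castSucc) ∈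
        (univ.filter fun g : Fin m → α => Function.Injective g ∧ ∀ j, g j ∈ W' j) := by
      intro f hf
      simp only [mem_filter, mem_univ, true_and] at hf ⊢
      exact ⟨fun p q h => Fin.castSucc_injective _ (hf.1 h), fun j => hf.2 j.castSucc⟩
    rw [Finset.card_eq_sum_card_fiberwise hmap]
    -- each fiber has the same cardinality
    have hfiber : ∀ g ∈ (univ.filter fun g : Fin m → α =>
        Function.Injective g ∧ ∀ j, g j ∈ W' j),
        ((univ.filter fun f : Fin (m+1) → α => Function.Injective f ∧ ∀ j, f j ∈ W j).filter
          fun f => (fun k : Fin m => f k.castSucc) = g).card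
        = (W (Fin.last m)).card - c := by
      intro g hg
      simp only [mem_filter, mem_univ, true_and] at hg
      have hcard : ((univ.filter fun f : Fin (m+1) → α =>
          Function.Injective f ∧ ∀ j, f j ∈ W j).filter
            fun f => (fun k : Fin m => f k.castSucc) = g).card
          = (W (Fin.last m) \ univ.image g).card := by
        refine Finset.card_bij' (fun f _ => f (Fin.last m)) (fun a _ => Fin.snoc g a) ?_ ?_ ?_ ?_
        · intro f hf
          simp only [mem_filter, mem_univ, true_and] at hf
          obtain ⟨⟨hinj, hmem⟩, hres⟩ := hf
          simp only [Finset.mem_sdiff, Finset.mem_image, mem_univ, true_and]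
          refine ⟨hmem _, ?_⟩
          rintro ⟨k, hk⟩
          have : f k.castSucc = f (Fin.last m) := by
            rw [show f k.castSucc = g k from congrFun hres k, hk]
          exact absurd (hinj this) (Fin.ne_last_of_lt (Fin.castSucc_lt_last k))
        · intro a ha
          simp only [Finset.mem_sdiff, Finset.mem_image, mem_univ, true_and] at ha
          simp only [mem_filter, mem_univ, true_and]
          refine ⟨⟨snoc_inj hg.1 (fun k hk => ha.2 ⟨k, hk⟩), ?_⟩, ?_⟩
          · intro j
            induction j using Fin.lastCases with
            | last => rw [Fin.snoc_last]; exact ha.1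
            | cast k => rw [Fin.snoc_castSucc]; exact hg.2 k
          · funext k
            rw [Fin.snoc_castSucc]
        · intro f hf
          simp only [mem_filter, mem_univ, true_and] at hf
          show (Fin.snoc g (f (Fin.last m)) : Fin (m+1) → α) = f
          funext j
          induction j using Fin.lastCases with
          | last => rw [Fin.snoc_last]
          | cast k =>
            rw [Fin.snoc_castSucc]
            exact (congrFun hf.2 k).symm
        · intro a _
          show (Fin.snoc g a : Fin (m+1) → α) (Fin.last m) = a
          rw [Fin.snoc_last]
      rw [hcard]
      have hinter : W (Fin.last m) ∩ univ.image g
          = (univ.filter fun k : Fin m => W' k ⊆ W (Fin.last m)).image g := by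
        ext a
        simp only [Finset.mem_inter, Finset.mem_image, mem_univ, true_and, mem_filter]
        constructor
        · rintro ⟨haW, k, hk⟩
          refine ⟨k, ?_, hk⟩
          rcases hlam k.castSucc (Fin.last m) (Fin.castSucc_lt_last k) with h | h
          · exact h
          · exact absurd haW (Finset.disjoint_left.mp h (hk ▸ hg.2 k))
        · rintro ⟨k, hsub, hk⟩
          exact ⟨hk ▸ hsub (hg.2 k), k, hk⟩
      have h1 : (W (Fin.last m) \ univ.image g).card + (W (Fin.last m) ∩ univ.image g).card
          = (W (Fin.last m)).card := Finset.card_sdiff_add_card_inter _ _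
      have h2 : (W (Fin.last m) ∩ univ.image g).card = c := by
        rw [hinter, Finset.card_image_of_injective _ hg.1, ← hc]
      rw [← h1, h2]
      exact (Nat.add_sub_cancel _ _).symm
    rw [Finset.sum_congr rfl hfiber]
    rw [Finset.sum_const, smul_eq_mul]
    rw [ih W' hlam']
    rw [Fin.prod_univ_castSucc]
    congr 1
    · refine Finset.prod_congr rfl fun i _ => ?_
      congr 1
      rw [card_filter_lt_and]
      congr 1
    · congr 1
      rw [card_filter_lt_and, hc]
      congr 1
      apply Finset.filter_congr
      intro k _
      simp [hW', Fin.castSucc_lt_last]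

/-! ### The score and the candidate sets -/

/-- The score `f_{z,π}(x)`: the length of the longest common prefix of `x` and `z`
in the order imposed by `π` (positions are 0-indexed, so `π j` for `(j : ℕ) < i`
corresponds to the 1-indexed positions `π(1),…,π(i)`). -/
def score (n : ℕ) (z : Fin n → Bool) (π : Equiv.Perm (Fin n)) (x : Fin n → Bool) : ℕ :=
  Nat.findGreatest (fun i => ∀ j : Fin n, (j : ℕ) < i → z (π j) = x (π j)) n

/-- The candidate set `V_j` of the guessing history `((x^1,s^1),…,(x^t,s^t))`:
`i ∉ V_j` iff one of the exclusion rules (1)–(3) applies. Here `j : Fin n` is the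
0-indexed version of the 1-indexed position `j+1`, so e.g. `j ≤ s^h` reads
`(j : ℕ) + 1 ≤ s h` and `j − 1` reads `(j : ℕ)`. -/
def candidateSet (n t : ℕ) (x : Fin t → Fin n → Bool) (s : Fin t → ℕ) (j : Fin n) :
    Set (Fin n) :=
  {i | ¬ ((∃ h ℓ : Fin t, (j : ℕ) + 1 ≤ s h ∧ s h ≤ s ℓ ∧ x h i ≠ x ℓ i) ∨
          (∃ h ℓ : Fin t, s h = (j : ℕ) ∧ s ℓ = (j : ℕ) ∧ x h i ≠ x ℓ i) ∨
          (∃ h ℓ : Fin t, s h = (j : ℕ) ∧ (j : ℕ) < s ℓ ∧ x h i = x ℓ i))}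

/-- The per-slot constraint: if `π j = i` then the value `b = z i` must agree with every
query of score greater than `j` at `i`, and disagree with every query of score exactly `j`. -/
def Cst (n t : ℕ) (x : Fin t → Fin n → Bool) (s : Fin t → ℕ) (j i : Fin n) (b : Bool) : Prop :=
  (∀ h, (j : ℕ) < s h → x h i = b) ∧ (∀ h, s h = (j : ℕ) → x h i ≠ b)

lemma mem_candidateSet_iff {n t : ℕ} {x : Fin t → Fin n → Bool} {s : Fin t → ℕ}
    {j i : Fin n} : i ∈ candidateSet n t x s j ↔ ∃ b, Cst n t x s j i b := by
  constructor
  · intro hne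
    by_cases H1 : ∃ ℓ, (j : ℕ) < s ℓ
    · obtain ⟨ℓ0, hℓ0⟩ := H1
      refine ⟨x ℓ0 i, fun h hh => ?_, fun h hh => ?_⟩
      · by_contra hne2
        rcases le_total (s h) (s ℓ0) with hle | hle
        · exact hne (Or.inl ⟨h, ℓ0, hh, hle, hne2⟩)
        · exact hne (Or.inl ⟨ℓ0, h, hℓ0, hle, Ne.symm hne2⟩)
      · intro he
        exact hne (Or.inr (Or.inr ⟨h, ℓ0, hh, hℓ0, he⟩))
    · by_cases H2 : ∃ ℓ, s ℓ = (j : ℕ)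
      · obtain ⟨ℓ0, hℓ0⟩ := H2
        refine ⟨!(x ℓ0 i), fun h hh => absurd ⟨h, hh⟩ H1, fun h hh => ?_⟩
        have he : x h i = x ℓ0 i := by
          by_contra hne2
          exact hne (Or.inr (Or.inl ⟨h, ℓ0, hh, hℓ0, hne2⟩))
        exact bool_ne_not he
      · exact ⟨true, fun h hh => absurd ⟨h, hh⟩ H1, fun h hh => absurd ⟨h, hh⟩ H2⟩
  · rintro ⟨b, hb1, hb2⟩
    rintro (⟨h, ℓ, h1, h2, h3⟩ | ⟨h, ℓ, h1, h2, h3⟩ | ⟨h, ℓ, h1, h2, h3⟩)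
    · exact h3 ((hb1 h h1).trans (hb1 ℓ (le_trans h1 h2)).symm)
    · exact h3 (bool_eq_of_ne_ne (hb2 h h1) (hb2 ℓ h2))
    · exact hb2 h h1 (h3.trans (hb1 ℓ h2))

lemma score_eq_iff {n : ℕ} (z : Fin n → Bool) (π : Equiv.Perm (Fin n)) (xx : Fin n → Bool)
    {m : ℕ} (hm : m < n) :
    score n z π xx = m ↔
      (∀ j : Fin n, (j : ℕ) < m → z (π j) = xx (π j)) ∧ z (π ⟨m, hm⟩) ≠ xx (π ⟨m, hm⟩) := by
  unfold score
  rw [Nat.findGreatest_eq_iff]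
  constructor
  · rintro ⟨h1, h2, h3⟩
    have hP : ∀ j : Fin n, (j : ℕ) < m → z (π j) = xx (π j) := by
      intro j hj
      rcases Nat.eq_zero_or_pos m with h0 | h0
      · exact absurd hj (by omega)
      · exact h2 (by omega) j hj
    refine ⟨hP, fun hcon => ?_⟩
    refine h3 (Nat.lt_succ_self m) hm fun j hj => ?_
    rcases Nat.lt_or_ge (j : ℕ) m with h | h
    · exact hP j h
    · have hje : j = ⟨m, hm⟩ := Fin.ext (show (j : ℕ) = m by omega)
      rw [hje]; exact hcon
  · rintro ⟨h1, h2⟩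
    refine ⟨le_of_lt hm, fun _ => h1, fun k hk _ hP => ?_⟩
    exact h2 (hP ⟨m, hm⟩ hk)

lemma consistent_iff {n t : ℕ} {x : Fin t → Fin n → Bool} {s : Fin t → ℕ}
    (hsn : ∀ i, s i < n) (z : Fin n → Bool) (π : Equiv.Perm (Fin n)) :
    (∀ i, score n z π (x i) = s i) ↔ ∀ j : Fin n, Cst n t x s j (π j) (z (π j)) := by
  constructor
  · intro hc j
    constructor
    · intro h hh
      exact (((score_eq_iff z π (x h) (hsn h)).1 (hc h)).1 j hh).symm
    · intro h hh
      have h2 := ((score_eq_iff z π (x h) (hsn h)).1 (hc h)).2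
      have hj : (⟨s h, hsn h⟩ : Fin n) = j := Fin.ext hh
      rw [hj] at h2
      exact fun e => h2 e.symm
  · intro hC i
    rw [score_eq_iff z π (x i) (hsn i)]
    refine ⟨fun j hj => ((hC j).1 i hj).symm, ?_⟩
    have := (hC ⟨s i, hsn i⟩).2 i rfl
    exact fun e => this e.symm

/-- The number of secrets consistent with a feasible guessing history with maximum score
`s* < n` equals `2^(n - s* - 1) · ∏_i (|V_i| - |{j < i : V_j ⊆ V_i}|)`. -/
theorem count_consistent_secrets (n t : ℕ) (ht : 1 ≤ t)
    (x : Fin t → Fin n → Bool) (s : Fin t → ℕ) (hs : ∀ i, s i ≤ n)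
    (hfeas : ∃ (z : Fin n → Bool) (π : Equiv.Perm (Fin n)), ∀ i, score n z π (x i) = s i)
    (hstar : Fin t) (hmax : ∀ i, s i ≤ s hstar) (hlt : s hstar < n) :
    Nat.card {p : (Fin n → Bool) × Equiv.Perm (Fin n) //
        ∀ i, score n p.1 p.2 (x i) = s i} =
      2 ^ (n - s hstar - 1) *
        ∏ i : Fin n,
          ((candidateSet n t x s i).ncard -
            {j : Fin n | j < i ∧ candidateSet n t x s j ⊆ candidateSet n t x s i}.ncard) := by
  classical
  have hsn : ∀ i, s i < n := fun i => lt_of_le_of_lt (hmax i) hlt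
  set V : Fin n → Set (Fin n) := candidateSet n t x s with hV
  set Vf : Fin n → Finset (Fin n) := fun j => univ.filter (· ∈ V j) with hVf
  have hmemVf : ∀ j i, i ∈ Vf j ↔ i ∈ V j := by
    intro j i; simp [hVf]
  -- candidate sets above the maximum score are everything
  have htriv : ∀ j : Fin n, s hstar < (j : ℕ) → ∀ i, i ∈ V j := by
    intro j hj i
    exact mem_candidateSet_iff.mpr ⟨true,
      fun h hh => absurd hh (by have := hmax h; omega),
      fun h hh => absurd hh (by have := hmax h; omega)⟩
  -- uniqueness of the constrained bit below the maximum score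
  have huniq : ∀ j i : Fin n, (j : ℕ) ≤ s hstar → ∀ b b',
      Cst n t x s j i b → Cst n t x s j i b' → b = b' := by
    intro j i hj b b' hb hb'
    rcases lt_or_eq_of_le hj with h | h
    · exact (hb.1 hstar h).symm.trans (hb'.1 hstar h)
    · exact bool_eq_of_ne_ne' (hb.2 hstar h.symm) (hb'.2 hstar h.symm)
  -- cardinality of the per-slot bit choice
  have card_cst : ∀ j i : Fin n, Nat.card {b : Bool // Cst n t x s j i b}
      = if (j : ℕ) ≤ s hstar then (if i ∈ V j then 1 else 0) else 2 := by
    intro j i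
    by_cases hj : (j : ℕ) ≤ s hstar
    · rw [if_pos hj]
      by_cases hi : i ∈ V j
      · rw [if_pos hi]
        obtain ⟨b0, hb0⟩ := mem_candidateSet_iff.1 hi
        rw [Nat.card_eq_fintype_card, Fintype.card_subtype, Finset.card_eq_one]
        refine ⟨b0, ?_⟩
        ext b
        simp only [mem_filter, mem_univ, true_and, Finset.mem_singleton]
        exact ⟨fun hb => huniq j i hj b b0 hb hb0, fun hb => hb ▸ hb0⟩
      · rw [if_neg hi]
        have : IsEmpty {b : Bool // Cst n t x s j i b} :=
          ⟨fun ⟨b, hb⟩ => hi (mem_candidateSet_iff.mpr ⟨b, hb⟩)⟩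
        exact Nat.card_of_isEmpty
    · rw [if_neg hj]
      have hall : ∀ b : Bool, Cst n t x s j i b := by
        intro b
        refine ⟨fun h hh => ?_, fun h hh => ?_⟩
        · exact absurd hh (by have := hmax h; omega)
        · exact absurd hh (by have := hmax h; omega)
      rw [Nat.card_eq_fintype_card, Fintype.card_subtype,
        Finset.filter_true_of_mem (fun b _ => hall b), Finset.card_univ]
      simp
  -- number of positions with large index
  have hcount : (univ.filter fun j : Fin n => ¬ ((j : ℕ) ≤ s hstar)).card
      = n - s hstar - 1 := by
    have h1 : (univ.filter fun j : Fin n => (j : ℕ) ≤ s hstar).card = s hstar + 1 := by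
      rw [show s hstar + 1 = (univ : Finset (Fin (s hstar + 1))).card by
        rw [Finset.card_univ]; simp]
      refine Finset.card_bij'
        (fun j hj => Fin.mk (j : ℕ) (by simp only [mem_filter, mem_univ, true_and] at hj; omega))
        (fun k _ => Fin.mk (k : ℕ) (by have := k.isLt; omega)) ?_ ?_ ?_ ?_
      · intro j hj; exact Finset.mem_univ _
      · intro k _
        simp only [mem_filter, mem_univ, true_and]
        have := k.isLt; omega
      · intro j hj; exact Fin.ext rfl
      · intro k hk; exact Fin.ext rfl
    have h2 := Finset.card_filter_add_card_filter_not
      (s := (univ : Finset (Fin n))) (p := fun j : Fin n => (j : ℕ) ≤ s hstar)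
    rw [Finset.card_univ, Fintype.card_fin] at h2
    omega
  -- per-permutation count of consistent strings
  have step2 : ∀ π : Equiv.Perm (Fin n),
      Nat.card {z : Fin n → Bool // ∀ i, score n z π (x i) = s i}
        = if (∀ j, π j ∈ V j) then 2 ^ (n - s hstar - 1) else 0 := by
    intro π
    have h1 : Nat.card {z : Fin n → Bool // ∀ i, score n z π (x i) = s i}
        = Nat.card {z : Fin n → Bool // ∀ j : Fin n, Cst n t x s j (π j) (z (π j))} :=
      Nat.card_congr (Equiv.subtypeEquivRight fun z => consistent_iff hsn z π)
    have e2 : {z : Fin n → Bool // ∀ j : Fin n, Cst n t x s j (π j) (z (π j))}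
        ≃ {w : Fin n → Bool // ∀ j : Fin n, Cst n t x s j (π j) (w j)} :=
      Equiv.subtypeEquiv (Equiv.piCongrLeft' (fun _ => Bool) π.symm) (fun z => Iff.rfl)
    have h2 : Nat.card {w : Fin n → Bool // ∀ j : Fin n, Cst n t x s j (π j) (w j)}
        = ∏ j : Fin n, Nat.card {b : Bool // Cst n t x s j (π j) b} := by
      rw [Nat.card_congr (Equiv.subtypePiEquivPi), Nat.card_pi]
    rw [h1, Nat.card_congr e2, h2]
    by_cases hP : ∀ j, π j ∈ V j
    · rw [if_pos hP]
      have : ∀ j : Fin n, Nat.card {b : Bool // Cst n t x s j (π j) b}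
          = if (j : ℕ) ≤ s hstar then 1 else 2 := by
        intro j
        rw [card_cst j (π j)]
        by_cases hj : (j : ℕ) ≤ s hstar
        · rw [if_pos hj, if_pos hj, if_pos (hP j)]
        · rw [if_neg hj, if_neg hj]
      rw [Finset.prod_congr rfl fun j _ => this j, Finset.prod_ite, Finset.prod_const,
        Finset.prod_const, one_pow, one_mul, hcount]
    · rw [if_neg hP]
      push_neg at hP
      obtain ⟨j0, hj0⟩ := hP
      have hj0le : (j0 : ℕ) ≤ s hstar := by
        by_contra hcon
        exact hj0 (htriv j0 (not_le.mp hcon) (π j0))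
      refine Finset.prod_eq_zero (Finset.mem_univ j0) ?_
      rw [card_cst j0 (π j0), if_pos hj0le, if_neg hj0]
  -- split the pair count along the permutation
  have e1 : {p : (Fin n → Bool) × Equiv.Perm (Fin n) // ∀ i, score n p.1 p.2 (x i) = s i}
      ≃ Σ π : Equiv.Perm (Fin n), {z : Fin n → Bool // ∀ i, score n z π (x i) = s i} :=
    (Equiv.subtypeEquiv (Equiv.prodComm _ _) (fun p => Iff.rfl)).trans
      (Equiv.subtypeProdEquivSigmaSubtype fun (π : Equiv.Perm (Fin n)) (z : Fin n → Bool) =>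
        ∀ i, score n z π (x i) = s i)
  have step1 : Nat.card {p : (Fin n → Bool) × Equiv.Perm (Fin n) //
      ∀ i, score n p.1 p.2 (x i) = s i}
      = ∑ π : Equiv.Perm (Fin n),
          Nat.card {z : Fin n → Bool // ∀ i, score n z π (x i) = s i} := by
    rw [Nat.card_congr e1, Nat.card_eq_fintype_card, Fintype.card_sigma]
    exact Finset.sum_congr rfl fun π _ => (Nat.card_eq_fintype_card).symm
  rw [step1, Finset.sum_congr rfl fun π _ => step2 π, Finset.sum_ite, Finset.sum_const,
    Finset.sum_const_zero, add_zero, smul_eq_mul]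
  -- laminar structure of the candidate sets
  have hlamV : ∀ j i : Fin n, j < i → V j ⊆ V i ∨ Disjoint (V j) (V i) := by
    intro j i hji
    have hji' : (j : ℕ) < (i : ℕ) := hji
    by_cases hB : ∃ ℓ, (i : ℕ) < s ℓ
    · by_cases hA : ∃ h, s h = (i : ℕ)
      · right
        rw [Set.disjoint_left]
        intro p hpj hpi
        obtain ⟨b, hb⟩ := mem_candidateSet_iff.1 hpj
        obtain ⟨c, hc⟩ := mem_candidateSet_iff.1 hpi
        obtain ⟨h, hh⟩ := hA
        obtain ⟨ℓ, hℓ⟩ := hB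
        have e1 : x h p = b := hb.1 h (by omega)
        have e2 : x ℓ p = b := hb.1 ℓ (by omega)
        have e3 : x ℓ p = c := hc.1 ℓ hℓ
        have e4 : x h p ≠ c := hc.2 h hh
        exact e4 (by rw [e1, ← e2, e3])
      · left
        intro q hq
        obtain ⟨b, hb⟩ := mem_candidateSet_iff.1 hq
        exact mem_candidateSet_iff.mpr
          ⟨b, fun h hh => hb.1 h (by omega), fun h hh => absurd ⟨h, hh⟩ hA⟩
    · left
      intro q hq
      obtain ⟨b, hb⟩ := mem_candidateSet_iff.1 hq
      refine mem_candidateSet_iff.mpr ⟨!b, fun h hh => absurd ⟨h, hh⟩ hB, fun h hh => ?_⟩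
      have : x h q = b := hb.1 h (by omega)
      exact bool_ne_not this
  have hlamVf : ∀ j i : Fin n, j < i → Vf j ⊆ Vf i ∨ Disjoint (Vf j) (Vf i) := by
    intro j i hji
    rcases hlamV j i hji with h | h
    · left
      intro a ha
      exact (hmemVf i a).mpr (h ((hmemVf j a).mp ha))
    · right
      rw [Finset.disjoint_left]
      intro a ha hb
      exact (Set.disjoint_left.mp h) ((hmemVf j a).mp ha) ((hmemVf i a).mp hb)
  -- permutations respecting the candidate sets vs injective functions
  have hperm : (univ.filter fun π : Equiv.Perm (Fin n) => ∀ j, π j ∈ V j).card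
      = (univ.filter fun f : Fin n → Fin n =>
          Function.Injective f ∧ ∀ j, f j ∈ Vf j).card := by
    refine Finset.card_bij (fun π _ => ⇑π) ?_ ?_ ?_
    · intro π hπ
      simp only [mem_filter, mem_univ, true_and] at hπ ⊢
      exact ⟨π.injective, fun j => (hmemVf j (π j)).mpr (hπ j)⟩
    · intro π1 h1 π2 h2 he
      exact Equiv.coe_fn_injective he
    · intro f hf
      simp only [mem_filter, mem_univ, true_and] at hf
      obtain ⟨hinj, hmem⟩ := hf
      refine ⟨Equiv.ofBijective f (Finite.injective_iff_bijective.mp hinj),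
        Finset.mem_filter.mpr ⟨Finset.mem_univ _, fun j => (hmemVf j _).mp (hmem j)⟩, rfl⟩
  rw [hperm, sdr_count n Vf hlamVf]
  rw [mul_comm]
  congr 1
  refine Finset.prod_congr rfl fun i _ => ?_
  have hv1 : (V i).ncard = (Vf i).card := by
    rw [Set.ncard_eq_toFinset_card']
    congr 1
    ext b
    simp [hVf]
  have hv2 : {j : Fin n | j < i ∧ V j ⊆ V i}.ncard
      = (univ.filter fun j : Fin n => j < i ∧ Vf j ⊆ Vf i).card := by
    rw [Set.ncard_eq_toFinset_card']
    congr 1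
    ext j
    simp only [Set.mem_toFinset, Set.mem_setOf_eq, mem_filter, mem_univ, true_and]
    constructor
    · rintro ⟨hji, hsub⟩
      exact ⟨hji, fun a ha => (hmemVf i a).mpr (hsub ((hmemVf j a).mp ha))⟩
    · rintro ⟨hji, hsub⟩
      exact ⟨hji, fun a ha => (hmemVf i a).mp (hsub ((hmemVf j a).mpr ha))⟩
  rw [hv1, hv2]
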